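/- arXiv:2203.07826 — 6 statements merged into one kernel-verified Lean document; each statement's English description precedes it below -/
import Mathlib

section
/- There exists C > 0 such that for all h > 0 and ξ ∈ ℝ with hξ ∈ [-3π/2, 3π/2] and ξ ≠ 0, the operator norm of (G₀ₕᶠᵇ(ξ) - iI)⁻¹ is at most C/|ξ|. -/
noncomputable def matOpNorm {n : Type*} [Fintype n] [DecidableEq n]
    (A : Matrix n n ℂ) : ℝ :=
  ‖Matrix.toEuclideanCLM (𝕜 := ℂ) A‖

noncomputable def G0fb (h m ξ : ℝ) : Matrix (Fin 2) (Fin 2) ℂ :=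
  !![(m : ℂ), -(1 / (Complex.I * h)) * (Complex.exp (-(Complex.I) * h * ξ) - 1);
     (1 / (Complex.I * h)) * (Complex.exp (Complex.I * h * ξ) - 1), (-m : ℂ)]

/-!
The matrix `G₀ = G0fb h m ξ` is Hermitian of the form `!![m, b; b̄, -m]`, so `G₀² = (m² + |b|²) I`
and `(G₀ - i)(G₀ - i)ᴴ = (m² + |b|² + 1) I`. By the C*-identity `‖T‖² = ‖TᴴT‖` this gives
`‖(G₀ - i)⁻¹‖ ≤ (m² + |b|² + 1)^(-1/2) ≤ 1 / |b|`. Finally `|b| = (2/h) |sin (hξ/2)|`, and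
`|sin x| ≥ |x|/5` for `|x| ≤ 3π/4` yields `|b| ≥ |ξ|/5`, so `C = 5` works.
-/

open Real Matrix

lemma div_five_le_sin {x : ℝ} (hx₀ : 0 ≤ x) (hx : x ≤ 3 * π / 4) : x / 5 ≤ sin x := by
  have hπ : 3 < π := pi_gt_three
  rcases le_total x (π / 2) with hle | hge
  · have hsin := mul_le_sin hx₀ hle
    have hlin : x / 5 ≤ 2 / π * x := by
      rw [div_mul_eq_mul_div, div_le_div_iff₀ (by norm_num) (by positivity)]
      nlinarith [pi_lt_d2]
    linarith
  · have hsin := mul_le_sin (x := π - x) (by linarith) (by linarith)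
    rw [sin_pi_sub] at hsin
    have hlin : x / 5 ≤ 2 / π * (π - x) := by
      rw [div_mul_eq_mul_div, div_le_div_iff₀ (by norm_num) (by positivity)]
      nlinarith [pi_lt_d2]
    linarith

lemma abs_div_five_le_abs_sin {x : ℝ} (hx : |x| ≤ 3 * π / 4) : |x| / 5 ≤ |sin x| := by
  rcases le_total 0 x with hx₀ | hx₀
  · rw [abs_of_nonneg hx₀] at hx ⊢
    exact (div_five_le_sin hx₀ hx).trans (le_abs_self _)
  · rw [abs_of_nonpos hx₀] at hx ⊢
    have hsin := div_five_le_sin (neg_nonneg.2 hx₀) hx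
    rw [sin_neg] at hsin
    linarith [neg_le_abs (sin x)]

lemma matOpNorm_inv_le_of_mul_conjTranspose_eq_smul {n : Type*} [Fintype n] [DecidableEq n]
    {A : Matrix n n ℂ} {c : ℝ} (hc : 0 < c) (hA : A * Aᴴ = (c : ℂ) • 1) :
    matOpNorm A⁻¹ ≤ (√c)⁻¹ := by
  have hc' : (c : ℂ) ≠ 0 := by exact_mod_cast hc.ne'
  have hinv : A⁻¹ = (c : ℂ)⁻¹ • Aᴴ :=
    inv_eq_right_inv (by rw [mul_smul_comm, hA, smul_smul, inv_mul_cancel₀ hc', one_smul])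
  have hstar : A⁻¹ᴴ * A⁻¹ = ((c⁻¹ : ℝ) : ℂ) • 1 := by
    rw [hinv, conjTranspose_smul, conjTranspose_conjTranspose, smul_mul_smul_comm, hA, smul_smul]
    congr 1
    rw [star_inv₀, Complex.star_def, Complex.conj_ofReal, Complex.ofReal_inv]
    field_simp
  set T := toEuclideanCLM (𝕜 := ℂ) A⁻¹
  have hT : ‖T‖ * ‖T‖ ≤ c⁻¹ := by
    rw [← CStarRing.norm_star_mul_self, ← map_star, ← map_mul, star_eq_conjTranspose, hstar,
      map_smul, map_one, norm_smul, Complex.norm_real, norm_inv, norm_of_nonneg hc.le]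
    exact mul_le_of_le_one_right (by positivity) ContinuousLinearMap.norm_id_le
  rw [matOpNorm, ← sqrt_inv, le_sqrt (norm_nonneg _) (by positivity), sq]
  exact hT

lemma Matrix.IsHermitian.sub_I_smul_one_mul_conjTranspose {n : Type*} [Fintype n] [DecidableEq n]
    {G : Matrix n n ℂ} (hG : G.IsHermitian) :
    (G - Complex.I • 1) * (G - Complex.I • 1)ᴴ = G * G + 1 := by
  rw [conjTranspose_sub, hG.eq, conjTranspose_smul, conjTranspose_one, Complex.star_def,
    Complex.conj_I]
  simp only [neg_smul, sub_neg_eq_add, sub_mul, mul_add, mul_smul_comm, smul_mul_assoc, mul_one,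
    one_mul, smul_sub, smul_smul, Complex.I_mul_I]
  module

lemma isHermitian_traceless_fin_two (m : ℝ) (b : ℂ) :
    (!![(m : ℂ), b; star b, -m]).IsHermitian := by
  ext i j
  fin_cases i <;> fin_cases j <;> simp

lemma traceless_hermitian_fin_two_mul_self (m : ℝ) (b : ℂ) :
    !![(m : ℂ), b; star b, -m] * !![(m : ℂ), b; star b, -m] = ((m ^ 2 + ‖b‖ ^ 2 : ℝ) : ℂ) • 1 := by
  ext i j
  fin_cases i <;> fin_cases j <;> simp [Complex.mul_conj', Complex.conj_mul'] <;> ring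

noncomputable def G0fbOffDiag (h ξ : ℝ) : ℂ :=
  -(1 / (Complex.I * h)) * (Complex.exp (-Complex.I * h * ξ) - 1)

lemma G0fb_eq (h m ξ : ℝ) :
    G0fb h m ξ = !![(m : ℂ), G0fbOffDiag h ξ; star (G0fbOffDiag h ξ), -m] := by
  have hstar :
      star (G0fbOffDiag h ξ) = 1 / (Complex.I * h) * (Complex.exp (Complex.I * h * ξ) - 1) := by
    simp [G0fbOffDiag, ← Complex.exp_conj]
  rw [hstar]
  rfl

lemma norm_G0fbOffDiag {h : ℝ} (hh : 0 < h) (ξ : ℝ) :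
    ‖G0fbOffDiag h ξ‖ = 2 * |sin (h * ξ / 2)| / h := by
  have hcoef : ‖-(1 / (Complex.I * h))‖ = 1 / h := by simp [abs_of_pos hh]
  have hexp : -Complex.I * h * ξ = Complex.I * ((-(h * ξ) : ℝ) : ℂ) := by push_cast; ring
  rw [G0fbOffDiag, hexp, norm_mul, hcoef, Complex.norm_exp_I_mul_ofReal_sub_one, neg_div, sin_neg,
    mul_neg, norm_neg, norm_mul, norm_two, norm_eq_abs]
  ring

lemma abs_div_five_le_norm_G0fbOffDiag {h ξ : ℝ} (hh : 0 < h) (hθ : |h * ξ| ≤ 3 * π / 2) :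
    |ξ| / 5 ≤ ‖G0fbOffDiag h ξ‖ := by
  have hsin := abs_div_five_le_abs_sin (x := h * ξ / 2) (by rw [abs_div, abs_two]; linarith)
  rw [norm_G0fbOffDiag hh, le_div_iff₀ hh]
  rw [abs_div, abs_mul, abs_two, abs_of_pos hh] at hsin
  linarith

lemma G0fb_sub_I_smul_one_mul_conjTranspose (h m ξ : ℝ) :
    (G0fb h m ξ - Complex.I • 1) * (G0fb h m ξ - Complex.I • 1)ᴴ
      = ((m ^ 2 + ‖G0fbOffDiag h ξ‖ ^ 2 + 1 : ℝ) : ℂ) • 1 := by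
  rw [G0fb_eq, (isHermitian_traceless_fin_two _ _).sub_I_smul_one_mul_conjTranspose,
    traceless_hermitian_fin_two_mul_self, Complex.ofReal_add _ 1, add_smul, Complex.ofReal_one,
    one_smul]

theorem G0fb_resolvent_bound_general (m : ℝ) :
    ∃ C > 0, ∀ h : ℝ, 0 < h → ∀ ξ : ℝ, ξ ≠ 0 →
      h * ξ ∈ Set.Icc (-(3 * Real.pi / 2)) (3 * Real.pi / 2) →
      matOpNorm ((G0fb h m ξ - Complex.I • (1 : Matrix (Fin 2) (Fin 2) ℂ))⁻¹)
        ≤ C / |ξ| := by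
  refine ⟨5, by norm_num, fun h hh ξ hξ hθ => ?_⟩
  have hb := abs_div_five_le_norm_G0fbOffDiag hh (abs_le.2 hθ)
  have hξ₀ : 0 < |ξ| := abs_pos.2 hξ
  calc matOpNorm _ ≤ (√(m ^ 2 + ‖G0fbOffDiag h ξ‖ ^ 2 + 1))⁻¹ :=
        matOpNorm_inv_le_of_mul_conjTranspose_eq_smul (by positivity)
          (G0fb_sub_I_smul_one_mul_conjTranspose h m ξ)
    _ ≤ (|ξ| / 5)⁻¹ := by
        refine inv_anti₀ (by positivity) (le_sqrt_of_sq_le ?_)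
        nlinarith [sq_nonneg m]
    _ = 5 / |ξ| := inv_div _ _

theorem G0fb_resolvent_bound (m : ℝ) (hm : 0 ≤ m) :
    ∃ C > 0, ∀ h : ℝ, 0 < h → ∀ ξ : ℝ, ξ ≠ 0 →
      h * ξ ∈ Set.Icc (-(3 * Real.pi / 2)) (3 * Real.pi / 2) →
      matOpNorm ((G0fb h m ξ - Complex.I • (1 : Matrix (Fin 2) (Fin 2) ℂ))⁻¹)
        ≤ C / |ξ| :=
  G0fb_resolvent_bound_general m
end

section
/- There exists C > 0 such that for all h ∈ (0,1] and ξ ∈ ℝ with hξ ∈ [-3π/2, 3π/2], the operator norm of (G₀(ξ) - iI)⁻¹ - (G₀ₕᶠᵇ(ξ) - iI)⁻¹ is at most Ch. -/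
noncomputable def G0 (m ξ : ℝ) : Matrix (Fin 2) (Fin 2) ℂ :=
  !![(m : ℂ), (ξ : ℂ); (ξ : ℂ), (-m : ℂ)]

/-!
Both symbols are Hermitian matrices `H = [[a, z̄], [z, -a]]`, and every such matrix satisfies
`H² = (a² + |z|²) • 1`. Hence `(H - i)⁻¹ = (1 + a² + |z|²)⁻¹ (H + i)`, whose norm is
`(1 + a² + |z|²)^(-1/2)` by the C⋆-identity. Writing the difference of resolvents as
`A⁻¹ (B - A) B⁻¹` bounds it by `|u - ξ| / (√(1 + m² + ξ²) √(1 + m² + |u|²))`, where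
`u = (e^{ihξ} - 1) / (ih)`. Taylor expansion gives `|u - ξ| ≤ 2hξ²`, and as long as
`|hξ| ≤ 3π/2` the symbol `u` stays comparable to `ξ`: `9π² |u|² ≥ 8 ξ²`. Together these
bound the quotient by `3π h`.
-/

open Complex
open scoped Real

section Algebra

variable {R : Type*} [Ring R] [Algebra ℂ R]

theorem sub_I_smul_one_mul_add_I_smul_one (H : R) :
    (H - I • 1) * (H + I • 1) = H * H + 1 := by
  simp only [sub_mul, mul_add, smul_mul_assoc, mul_smul_comm, one_mul, mul_one]
  match_scalars <;> simp

theorem sub_I_smul_one_mul_smul_add_I_smul_one {H : R} {s : ℝ} (hs : 0 ≤ s)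
    (hsq : H * H = (s : ℂ) • 1) :
    (H - I • 1) * (((1 + s : ℝ) : ℂ)⁻¹ • (H + I • 1)) = 1 := by
  have : ((1 + s : ℝ) : ℂ) ≠ 0 := by norm_cast; positivity
  rw [mul_smul_comm, sub_I_smul_one_mul_add_I_smul_one, hsq,
    show (s : ℂ) • (1 : R) + 1 = ((1 + s : ℝ) : ℂ) • 1 by push_cast; module,
    smul_smul, inv_mul_cancel₀ this, one_smul]

end Algebra

section CStarAlgebra

variable {A : Type*} [CStarAlgebra A] [Nontrivial A]

theorem CStarRing.norm_eq_sqrt_of_star_mul_self_eq {x : A} {c : ℝ} (hc : 0 ≤ c)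
    (h : star x * x = (c : ℂ) • 1) : ‖x‖ = √c := by
  rw [eq_comm, Real.sqrt_eq_iff_mul_self_eq hc (norm_nonneg _), ← CStarRing.norm_star_mul_self, h,
    norm_smul, norm_one, mul_one, Complex.norm_real, Real.norm_of_nonneg hc]

theorem IsSelfAdjoint.norm_add_I_smul_one {H : A} (hH : IsSelfAdjoint H) {s : ℝ} (hs : 0 ≤ s)
    (hsq : H * H = (s : ℂ) • 1) : ‖H + I • 1‖ = √(1 + s) := by
  refine CStarRing.norm_eq_sqrt_of_star_mul_self_eq (by positivity) ?_
  rw [star_add, hH.star_eq, star_smul, star_one, star_def, conj_I, neg_smul, ← sub_eq_add_neg,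
    sub_I_smul_one_mul_add_I_smul_one, hsq]
  push_cast
  module

end CStarAlgebra

section Matrix

open scoped Matrix.Norms.L2Operator

variable {n : Type*} [Fintype n] [DecidableEq n] {H K : Matrix n n ℂ} {s t : ℝ}

theorem matOpNorm_eq_norm (A : Matrix n n ℂ) : matOpNorm A = ‖A‖ :=
  rfl

theorem Matrix.norm_inv_sub_I_smul_one [Nonempty n] (hH : IsSelfAdjoint H) (hs : 0 ≤ s)
    (hsq : H * H = (s : ℂ) • 1) : ‖(H - I • 1)⁻¹‖ = (√(1 + s))⁻¹ := by
  rw [Matrix.inv_eq_right_inv (sub_I_smul_one_mul_smul_add_I_smul_one hs hsq), norm_smul,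
    hH.norm_add_I_smul_one hs hsq, norm_inv, norm_real, Real.norm_of_nonneg (by positivity),
    inv_mul_eq_div, Real.sqrt_div_self]

theorem Matrix.isUnit_sub_I_smul_one (hs : 0 ≤ s) (hsq : H * H = (s : ℂ) • 1) :
    IsUnit (H - I • 1) :=
  (Matrix.isUnit_iff_isUnit_det _).mpr
    (Matrix.isUnit_det_of_right_inverse (sub_I_smul_one_mul_smul_add_I_smul_one hs hsq))

theorem Matrix.norm_inv_sub_I_smul_one_sub_inv_le [Nonempty n] (hH : IsSelfAdjoint H)
    (hK : IsSelfAdjoint K) (hs : 0 ≤ s) (ht : 0 ≤ t) (hHsq : H * H = (s : ℂ) • 1)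
    (hKsq : K * K = (t : ℂ) • 1) :
    ‖(H - I • 1)⁻¹ - (K - I • 1)⁻¹‖ ≤ ‖K - H‖ / (√(1 + s) * √(1 + t)) := by
  rw [Matrix.inv_sub_inv (iff_of_true (Matrix.isUnit_sub_I_smul_one hs hHsq)
    (Matrix.isUnit_sub_I_smul_one ht hKsq)), sub_sub_sub_cancel_right]
  calc _ ≤ ‖(H - I • 1)⁻¹‖ * ‖K - H‖ * ‖(K - I • 1)⁻¹‖ := norm_mul₃_le
    _ = _ := by
      rw [Matrix.norm_inv_sub_I_smul_one hH hs hHsq, Matrix.norm_inv_sub_I_smul_one hK ht hKsq]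
      field_simp

end Matrix

section Dirac

open scoped Matrix.Norms.L2Operator

def diracSymbol (a : ℝ) (z : ℂ) : Matrix (Fin 2) (Fin 2) ℂ :=
  !![(a : ℂ), star z; z, -(a : ℂ)]

variable (a : ℝ) (z w : ℂ)

theorem isSelfAdjoint_diracSymbol : IsSelfAdjoint (diracSymbol a z) := by
  ext i j
  fin_cases i <;> fin_cases j <;> simp [diracSymbol, Matrix.star_apply]

theorem diracSymbol_mul_self :
    diracSymbol a z * diracSymbol a z = ((a ^ 2 + ‖z‖ ^ 2 : ℝ) : ℂ) • 1 := by
  ext i j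
  fin_cases i <;> fin_cases j <;> simp [diracSymbol, conj_mul', mul_conj', sq] <;> ring

theorem diracSymbol_sub_diracSymbol :
    diracSymbol a w - diracSymbol a z = diracSymbol 0 (w - z) := by
  ext i j
  fin_cases i <;> fin_cases j <;> simp [diracSymbol]

theorem norm_diracSymbol : ‖diracSymbol a z‖ = √(a ^ 2 + ‖z‖ ^ 2) :=
  CStarRing.norm_eq_sqrt_of_star_mul_self_eq (by positivity) <| by
    rw [(isSelfAdjoint_diracSymbol a z).star_eq, diracSymbol_mul_self]

theorem norm_inv_diracSymbol_sub_I_smul_one_sub_inv_le :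
    ‖(diracSymbol a z - I • 1)⁻¹ - (diracSymbol a w - I • 1)⁻¹‖ ≤
      ‖w - z‖ / (√(1 + (a ^ 2 + ‖z‖ ^ 2)) * √(1 + (a ^ 2 + ‖w‖ ^ 2))) := by
  have h := Matrix.norm_inv_sub_I_smul_one_sub_inv_le (isSelfAdjoint_diracSymbol a z)
    (isSelfAdjoint_diracSymbol a w) (by positivity) (by positivity)
    (diracSymbol_mul_self a z) (diracSymbol_mul_self a w)
  rwa [diracSymbol_sub_diracSymbol, norm_diracSymbol, zero_pow two_ne_zero, zero_add,
    Real.sqrt_sq (norm_nonneg _)] at h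

end Dirac

section ForwardDifference

theorem norm_exp_I_mul_ofReal_sub_one_sq (t : ℝ) :
    ‖exp (I * t) - 1‖ ^ 2 = 2 - 2 * Real.cos t := by
  rw [norm_exp_I_mul_ofReal_sub_one, Real.norm_eq_abs, sq_abs, mul_pow, Real.sin_sq,
    Real.cos_sq (t / 2), mul_div_cancel₀ t two_ne_zero]
  ring

theorem norm_exp_I_mul_ofReal_sub_one_sub_le (t : ℝ) :
    ‖exp (I * t) - 1 - I * t‖ ≤ 2 * t ^ 2 := by
  have hIt : ‖I * t‖ = |t| := by simp
  rcases le_or_gt |t| 1 with ht | ht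
  · calc ‖exp (I * t) - 1 - I * t‖ ≤ ‖I * t‖ ^ 2 :=
          norm_exp_sub_one_sub_id_le (hIt ▸ ht)
      _ ≤ 2 * t ^ 2 := by rw [hIt, sq_abs]; linarith [sq_nonneg t]
  · calc ‖exp (I * t) - 1 - I * t‖ ≤ ‖exp (I * t) - 1‖ + ‖I * t‖ := norm_sub_le _ _
      _ ≤ |t| + |t| := by rw [hIt]; gcongr; exact Real.norm_exp_I_mul_ofReal_sub_one_le
      _ ≤ 2 * t ^ 2 := by nlinarith [sq_abs t]

theorem sq_le_norm_exp_I_mul_ofReal_sub_one_sq {t : ℝ} (ht : |t| ≤ 3 * π / 2) :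
    8 * t ^ 2 ≤ 9 * π ^ 2 * ‖exp (I * t) - 1‖ ^ 2 := by
  rw [norm_exp_I_mul_ofReal_sub_one_sq]
  have ht2 : t ^ 2 ≤ (3 * π / 2) ^ 2 := by rw [← sq_abs]; gcongr
  rcases le_or_gt |t| π with htπ | htπ
  · have hcos := Real.cos_le_one_sub_mul_cos_sq htπ
    have hπ : π ^ 2 * (2 / π ^ 2 * t ^ 2) = 2 * t ^ 2 := by field_simp
    nlinarith [sq_nonneg t, Real.pi_pos]
  · have hcos : Real.cos t ≤ 0 := by
      rw [← Real.cos_abs]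
      exact Real.cos_nonpos_of_pi_div_two_le_of_le (by linarith [Real.pi_pos]) (by linarith)
    nlinarith [Real.pi_pos]

noncomputable def forwardDiffSymbol (h ξ : ℝ) : ℂ := (exp (I * ↑(h * ξ)) - 1) / (I * h)

theorem norm_forwardDiffSymbol_sub_le {h : ℝ} (hh : h ≠ 0) (ξ : ℝ) :
    ‖forwardDiffSymbol h ξ - ξ‖ ≤ 2 * |h| * ξ ^ 2 := by
  have hsplit :
      forwardDiffSymbol h ξ - ξ = (exp (I * ↑(h * ξ)) - 1 - I * ↑(h * ξ)) / (I * h) := by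
    have hh' : (h : ℂ) ≠ 0 := by exact_mod_cast hh
    simp only [forwardDiffSymbol]
    field_simp
    push_cast
    ring
  rw [hsplit, norm_div, norm_mul, norm_I, one_mul, norm_real, Real.norm_eq_abs,
    div_le_iff₀ (abs_pos.mpr hh)]
  calc _ ≤ 2 * (h * ξ) ^ 2 := norm_exp_I_mul_ofReal_sub_one_sub_le _
    _ = 2 * |h| * ξ ^ 2 * |h| := by rw [mul_pow, ← sq_abs h]; ring

theorem sq_le_norm_forwardDiffSymbol_sq {h : ℝ} (hh : h ≠ 0) (ξ : ℝ)
    (hξ : |h * ξ| ≤ 3 * π / 2) :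
    8 * ξ ^ 2 ≤ 9 * π ^ 2 * ‖forwardDiffSymbol h ξ‖ ^ 2 := by
  have hexp := sq_le_norm_exp_I_mul_ofReal_sub_one_sq hξ
  rw [forwardDiffSymbol, norm_div, norm_mul, norm_I, one_mul, norm_real, Real.norm_eq_abs, div_pow,
    sq_abs, mul_div_assoc', le_div_iff₀ (by positivity)]
  linarith [mul_pow h ξ 2]

end ForwardDifference

theorem G0_eq_diracSymbol (m ξ : ℝ) : G0 m ξ = diracSymbol m ξ := by
  simp [G0, diracSymbol]

theorem G0fb_eq_diracSymbol (h m ξ : ℝ) :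
    G0fb h m ξ = diracSymbol m (forwardDiffSymbol h ξ) := by
  simp only [G0fb, diracSymbol, forwardDiffSymbol, star_div₀, star_sub, star_one, star_mul',
    star_def, ← exp_conj, map_mul, conj_I, conj_ofReal]
  push_cast
  congr 2 <;> ring_nf

theorem resolvent_diff_bound_1D_fb_general (m : ℝ) :
    ∃ C > 0, ∀ h : ℝ, 0 < h → h ≤ 1 → ∀ ξ : ℝ,
      h * ξ ∈ Set.Icc (-(3 * Real.pi / 2)) (3 * Real.pi / 2) →
      matOpNorm ((G0 m ξ - Complex.I • (1 : Matrix (Fin 2) (Fin 2) ℂ))⁻¹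
          - (G0fb h m ξ - Complex.I • (1 : Matrix (Fin 2) (Fin 2) ℂ))⁻¹)
        ≤ C * h := by
  refine ⟨3 * π, by positivity, fun h hh _ ξ hξ => ?_⟩
  set u := forwardDiffSymbol h ξ
  have hu_sub : ‖u - ξ‖ ≤ 2 * h * ξ ^ 2 := by
    simpa only [abs_of_pos hh] using norm_forwardDiffSymbol_sub_le hh.ne' ξ
  have hu_lower : 8 * ξ ^ 2 ≤ 9 * π ^ 2 * ‖u‖ ^ 2 :=
    sq_le_norm_forwardDiffSymbol_sq hh.ne' ξ (abs_le.mpr hξ)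
  rw [matOpNorm_eq_norm, G0_eq_diracSymbol, G0fb_eq_diracSymbol]
  refine (norm_inv_diracSymbol_sub_I_smul_one_sub_inv_le m ξ u).trans ?_
  rw [div_le_iff₀ (by positivity), ← Real.sqrt_mul (by positivity), norm_real, Real.norm_eq_abs,
    sq_abs, ← Real.sqrt_sq (by positivity : 0 ≤ 3 * π * h), ← Real.sqrt_mul (by positivity)]
  refine Real.le_sqrt_of_sq_le ?_
  calc ‖u - ξ‖ ^ 2 ≤ (2 * h * ξ ^ 2) ^ 2 := by gcongr
    _ ≤ h ^ 2 * ξ ^ 2 * (9 * π ^ 2 * ‖u‖ ^ 2) := by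
      nlinarith [mul_le_mul_of_nonneg_left hu_lower (by positivity : 0 ≤ h ^ 2 * ξ ^ 2)]
    _ = (3 * π * h) ^ 2 * (ξ ^ 2 * ‖u‖ ^ 2) := by ring
    _ ≤ (3 * π * h) ^ 2 * ((1 + (m ^ 2 + ξ ^ 2)) * (1 + (m ^ 2 + ‖u‖ ^ 2))) := by
      gcongr <;> nlinarith [sq_nonneg m]

theorem resolvent_diff_bound_1D_fb (m : ℝ) (hm : 0 ≤ m) :
    ∃ C > 0, ∀ h : ℝ, 0 < h → h ≤ 1 → ∀ ξ : ℝ,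
      h * ξ ∈ Set.Icc (-(3 * Real.pi / 2)) (3 * Real.pi / 2) →
      matOpNorm ((G0 m ξ - Complex.I • (1 : Matrix (Fin 2) (Fin 2) ℂ))⁻¹
          - (G0fb h m ξ - Complex.I • (1 : Matrix (Fin 2) (Fin 2) ℂ))⁻¹)
        ≤ C * h :=
  resolvent_diff_bound_1D_fb_general m
end

section
/- For each fixed m ≥ 0 there exists c > 0 such that for all h ∈ (0,1], the maximum over ξ ∈ [-π/h, π/h] of the operator norm of (G₀ₕᶠᵇ(ξ) - iI)⁻¹ - (G₀ₕˢ(ξ) - iI)⁻¹ is at least c. In fact one may take c = 2((1+m²)² + 4(1+m²))^{-1/2}. -/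
noncomputable def G0s (h m ξ : ℝ) : Matrix (Fin 2) (Fin 2) ℂ :=
  !![(m : ℂ), ((Real.sin (h * ξ) / h : ℝ) : ℂ);
     ((Real.sin (h * ξ) / h : ℝ) : ℂ), (-m : ℂ)]

open Complex Matrix

lemma sqrt_sum_norm_sq_le_matOpNorm {n : Type*} [Fintype n] [DecidableEq n]
    (A : Matrix n n ℂ) (j : n) : √(∑ i, ‖A i j‖ ^ 2) ≤ matOpNorm A := by
  have hcol : toEuclideanCLM (𝕜 := ℂ) A (EuclideanSpace.single j 1) =
      WithLp.toLp 2 (fun i => A i j) := by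
    ext i; simp [mulVec, dotProduct]
  calc √(∑ i, ‖A i j‖ ^ 2) = ‖toEuclideanCLM (𝕜 := ℂ) A (EuclideanSpace.single j 1)‖ := by
        rw [hcol, EuclideanSpace.norm_eq]
    _ ≤ matOpNorm A * ‖EuclideanSpace.single j (1 : ℂ)‖ := (toEuclideanCLM (𝕜 := ℂ) A).le_opNorm _
    _ = matOpNorm A := by simp

lemma inv_sub_I_smul_one_of_mul_self {n : Type*} [Fintype n] [DecidableEq n]
    {H : Matrix n n ℂ} {a : ℂ} (hH : H * H = a • 1) (ha : a + 1 ≠ 0) :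
    (H - I • 1)⁻¹ = (a + 1)⁻¹ • (H + I • 1) := by
  refine inv_eq_right_inv ?_
  have : (H - I • 1) * (H + I • 1) = (a + 1) • (1 : Matrix n n ℂ) := by
    simp only [sub_mul, mul_add, smul_mul_assoc, mul_smul_comm, one_mul, mul_one, hH]
    match_scalars
    · linear_combination -I_sq
    · ring
  rw [mul_smul_comm, this, smul_smul, inv_mul_cancel₀ ha, one_smul]

lemma div_mul_add_le_div_mul_add {b x y : ℝ} (hb : 0 < b) (hx : 0 ≤ x) (hxy : x ≤ y) :
    x / (b * (b + x)) ≤ y / (b * (b + y)) := by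
  have hy : 0 ≤ y := hx.trans hxy
  rw [div_le_div_iff₀ (by positivity) (by positivity)]
  linarith [mul_le_mul_of_nonneg_left hxy (mul_nonneg hb.le hb.le)]

def pauliY : Matrix (Fin 2) (Fin 2) ℂ := !![0, -I; I, 0]
def pauliZ : Matrix (Fin 2) (Fin 2) ℂ := !![1, 0; 0, -1]

lemma pauli_mul_self (m k : ℂ) :
    (m • pauliZ + k • pauliY) * (m • pauliZ + k • pauliY) = (m ^ 2 + k ^ 2) • 1 := by
  ext i j
  fin_cases i <;> fin_cases j <;> simp [pauliY, pauliZ, Matrix.mul_apply, Fin.sum_univ_two] <;>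
    ring_nf <;> simp only [I_sq] <;> ring

lemma G0fb_eq_G0s_add (h m ξ : ℝ) :
    G0fb h m ξ = G0s h m ξ + (((1 - Real.cos (h * ξ)) / h : ℝ) : ℂ) • pauliY := by
  have hplus : I * h * ξ = ((h * ξ : ℝ) : ℂ) * I := by push_cast; ring
  have hminus : -I * h * ξ = ((-(h * ξ) : ℝ) : ℂ) * I := by push_cast; ring
  rcases eq_or_ne h 0 with rfl | hh
  · simp [G0fb, G0s]
  rw [G0fb, hplus, hminus, exp_mul_I, exp_mul_I, ← ofReal_cos, ← ofReal_sin, ← ofReal_cos,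
    ← ofReal_sin, Real.cos_neg, Real.sin_neg]
  ext i j
  fin_cases i <;> fin_cases j <;> simp [G0s, pauliY] <;> field_simp <;>
    ring_nf <;> simp only [I_sq] <;> ring

lemma G0s_pi_div {h : ℝ} (m : ℝ) (hh : h ≠ 0) : G0s h m (Real.pi / h) = (m : ℂ) • pauliZ := by
  ext i j
  fin_cases i <;> fin_cases j <;> simp [G0s, pauliZ, mul_div_cancel₀ _ hh]

lemma G0fb_pi_div {h : ℝ} (m : ℝ) (hh : h ≠ 0) :
    G0fb h m (Real.pi / h) = (m : ℂ) • pauliZ + ((2 / h : ℝ) : ℂ) • pauliY := by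
  rw [G0fb_eq_G0s_add, G0s_pi_div m hh, mul_div_cancel₀ _ hh, Real.cos_pi]
  norm_num

lemma sqrt_le_matOpNorm_inv_sub_inv (m k : ℝ) :
    √(k ^ 2 / ((1 + m ^ 2) * (1 + m ^ 2 + k ^ 2))) ≤
      matOpNorm
        (((m : ℂ) • pauliZ + (k : ℂ) • pauliY - I • 1)⁻¹ - ((m : ℂ) • pauliZ - I • 1)⁻¹) := by
  have hZ : ((m : ℂ) • pauliZ) * ((m : ℂ) • pauliZ) = (m : ℂ) ^ 2 • 1 := by
    simpa using pauli_mul_self m 0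
  rw [inv_sub_I_smul_one_of_mul_self (pauli_mul_self m k) (by norm_cast; positivity),
    inv_sub_I_smul_one_of_mul_self hZ (by norm_cast; positivity)]
  refine le_trans (Real.sqrt_le_sqrt (le_of_eq ?_)) (sqrt_sum_norm_sq_le_matOpNorm _ 0)
  have hfactor : ∀ x y : ℂ, x * m + x * I - (y * m + y * I) = (x - y) * (m + I) := by
    intros; ring
  have hnorm : ‖(m : ℂ) + I‖ ^ 2 = 1 + m ^ 2 := by
    simp [Complex.sq_norm, normSq_apply]; ring
  simp [Fin.sum_univ_two, pauliY, pauliZ, hfactor, mul_pow, hnorm]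
  norm_cast
  simp only [Real.norm_eq_abs, sq_abs]
  field_simp
  ring

theorem fb_symmetric_nonconvergence_1D_general (m : ℝ) :
    ∃ c : ℝ, c = 2 / Real.sqrt ((1 + m ^ 2) ^ 2 + 4 * (1 + m ^ 2)) ∧ 0 < c ∧
      ∀ h : ℝ, 0 < h → h ≤ 1 →
        ∃ ξ ∈ Set.Icc (-(Real.pi / h)) (Real.pi / h),
          c ≤ matOpNorm ((G0fb h m ξ - Complex.I • (1 : Matrix (Fin 2) (Fin 2) ℂ))⁻¹
              - (G0s h m ξ - Complex.I • (1 : Matrix (Fin 2) (Fin 2) ℂ))⁻¹) := by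
  refine ⟨_, rfl, by positivity, fun h h0 h1 => ?_⟩
  have hξ : 0 ≤ Real.pi / h := div_nonneg Real.pi_pos.le h0.le
  refine ⟨Real.pi / h, ⟨by linarith, le_rfl⟩, ?_⟩
  rw [G0fb_pi_div m h0.ne', G0s_pi_div m h0.ne']
  refine le_trans ?_ (sqrt_le_matOpNorm_inv_sub_inv m (2 / h))
  have hk : (2 : ℝ) ^ 2 ≤ (2 / h) ^ 2 := by
    gcongr
    rw [le_div_iff₀ h0]
    linarith
  calc 2 / √((1 + m ^ 2) ^ 2 + 4 * (1 + m ^ 2))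
      = √(2 ^ 2 / ((1 + m ^ 2) * (1 + m ^ 2 + 2 ^ 2))) := by
        rw [Real.sqrt_div (by positivity), Real.sqrt_sq zero_le_two]
        ring_nf
    _ ≤ √((2 / h) ^ 2 / ((1 + m ^ 2) * (1 + m ^ 2 + (2 / h) ^ 2))) :=
        Real.sqrt_le_sqrt (div_mul_add_le_div_mul_add (by positivity) (by positivity) hk)

theorem fb_symmetric_nonconvergence_1D (m : ℝ) (hm : 0 ≤ m) :
    ∃ c : ℝ, c = 2 / Real.sqrt ((1 + m ^ 2) ^ 2 + 4 * (1 + m ^ 2)) ∧ 0 < c ∧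
      ∀ h : ℝ, 0 < h → h ≤ 1 →
        ∃ ξ ∈ Set.Icc (-(Real.pi / h)) (Real.pi / h),
          c ≤ matOpNorm ((G0fb h m ξ - Complex.I • (1 : Matrix (Fin 2) (Fin 2) ℂ))⁻¹
              - (G0s h m ξ - Complex.I • (1 : Matrix (Fin 2) (Fin 2) ℂ))⁻¹) :=
  fb_symmetric_nonconvergence_1D_general m
end

section
/- There exists C > 0 such that for all h > 0 and ξ ∈ ℝ² with hξ ∈ [-3π/2, 3π/2]² and ξ ≠ 0, the operator norm of (G̃₀ₕˢ(ξ) - iI)⁻¹ is at most C/|ξ|. -/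
noncomputable def fh (h ξ₁ ξ₂ : ℝ) : ℝ :=
  4 / h * Real.sin (h * ξ₁ / 2) ^ 2 + 4 / h * Real.sin (h * ξ₂ / 2) ^ 2

noncomputable def G0s2 (h m ξ₁ ξ₂ : ℝ) : Matrix (Fin 2) (Fin 2) ℂ :=
  !![(m : ℂ), ((Real.sin (h * ξ₁) / h : ℝ) : ℂ) - Complex.I * ((Real.sin (h * ξ₂) / h : ℝ) : ℂ);
     ((Real.sin (h * ξ₁) / h : ℝ) : ℂ) + Complex.I * ((Real.sin (h * ξ₂) / h : ℝ) : ℂ), (-m : ℂ)]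

noncomputable def G0s2mod (h m ξ₁ ξ₂ : ℝ) : Matrix (Fin 2) (Fin 2) ℂ :=
  G0s2 h m ξ₁ ξ₂ + ((fh h ξ₁ ξ₂ : ℝ) : ℂ) • !![(1 : ℂ), 0; 0, -1]

/-!
The symbol is `a σ₃ + s₁ σ₁ + s₂ σ₂` with `a = m + f_h(ξ)` and `sⱼ = sin(hξⱼ)/h`: a Hermitian matrix
whose square is `g • 1`, `g = a² + s₁² + s₂²`. Hence `(G - i)⁻¹ = (G + i)/(g + 1)`, and the C⋆-identity
`‖(G + i)‖² = ‖(G - i)(G + i)‖ = g + 1` gives `‖(G - i)⁻¹‖ = 1/√(g + 1)`.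

For the lower bound on `g`, on `|θ| ≤ 3π/2` one has `θ² ≤ (3π/4)² (sin²θ + (4 sin²(θ/2))²)`:
Jordan's inequality handles `|θ| ≤ π/2`, and beyond that `4 sin²(θ/2) = 2(1 - cos θ) ≥ 2`.
Scaling by `h` and using `a² ≥ f₁² + f₂²` (as `m ≥ 0`) gives `|ξ|² ≤ (3π/4)² g`.
-/

open Real

lemma sq_le_sin_sq_add_four_sin_half_sq_sq {θ : ℝ} (hθ : |θ| ≤ 3 * π / 2) :
    θ ^ 2 ≤ (3 * π / 4) ^ 2 * (sin θ ^ 2 + (4 * sin (θ / 2) ^ 2) ^ 2) := by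
  have hπ := pi_pos
  rcases le_or_gt |θ| (π / 2) with hsmall | hlarge
  · have hJ : 2 / π * |θ| ≤ |sin θ| := mul_abs_le_abs_sin hsmall
    have hJ' : |θ| ≤ π / 2 * |sin θ| := by
      rw [div_mul_eq_mul_div, div_le_iff₀ hπ] at hJ; linarith
    have hsq : θ ^ 2 ≤ (π / 2) ^ 2 * sin θ ^ 2 := by
      rw [← sq_abs θ, ← sq_abs (sin θ), ← mul_pow]
      exact pow_le_pow_left₀ (abs_nonneg θ) hJ' 2
    nlinarith [sq_nonneg (sin θ), sq_nonneg (4 * sin (θ / 2) ^ 2)]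
  · have hcos : cos θ ≤ 0 := by
      rw [← cos_abs]
      exact cos_nonpos_of_pi_div_two_le_of_le hlarge.le (by linarith)
    have hhalf : 2 ≤ 4 * sin (θ / 2) ^ 2 := by
      have := sin_sq_eq_half_sub (θ / 2)
      rw [mul_div_cancel₀ θ two_ne_zero] at this
      linarith
    have hθ : θ ^ 2 ≤ (3 * π / 2) ^ 2 := by
      rw [← sq_abs θ]; exact pow_le_pow_left₀ (abs_nonneg θ) hθ 2
    nlinarith [mul_le_mul hhalf hhalf zero_le_two (by linarith), sq_nonneg (sin θ)]

lemma sq_le_scaled_sin_sq_add_four_sin_half_sq_sq {h ξ : ℝ} (hh : 0 < h)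
    (hξ : |h * ξ| ≤ 3 * π / 2) :
    ξ ^ 2 ≤ (3 * π / 4) ^ 2 * ((sin (h * ξ) / h) ^ 2 + (4 / h * sin (h * ξ / 2) ^ 2) ^ 2) := by
  have key := sq_le_sin_sq_add_four_sin_half_sq_sq hξ
  have hh2 : 0 < h ^ 2 := by positivity
  calc ξ ^ 2 = (h * ξ) ^ 2 / h ^ 2 := by field_simp
    _ ≤ (3 * π / 4) ^ 2 * (sin (h * ξ) ^ 2 + (4 * sin (h * ξ / 2) ^ 2) ^ 2) / h ^ 2 := by gcongr
    _ = _ := by field_simp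

lemma sq_add_sq_le_G0s2mod_symbol {h m ξ₁ ξ₂ : ℝ} (hm : 0 ≤ m) (hh : 0 < h)
    (hξ₁ : |h * ξ₁| ≤ 3 * π / 2) (hξ₂ : |h * ξ₂| ≤ 3 * π / 2) :
    ξ₁ ^ 2 + ξ₂ ^ 2 ≤
      (3 * π / 4) ^ 2 * ((m + fh h ξ₁ ξ₂) ^ 2 + (sin (h * ξ₁) / h) ^ 2 + (sin (h * ξ₂) / h) ^ 2) := by
  have h₁ := sq_le_scaled_sin_sq_add_four_sin_half_sq_sq hh hξ₁
  have h₂ := sq_le_scaled_sin_sq_add_four_sin_half_sq_sq hh hξ₂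
  have hf₁ : 0 ≤ 4 / h * sin (h * ξ₁ / 2) ^ 2 := by positivity
  have hf₂ : 0 ≤ 4 / h * sin (h * ξ₂ / 2) ^ 2 := by positivity
  have hsq : (4 / h * sin (h * ξ₁ / 2) ^ 2) ^ 2 + (4 / h * sin (h * ξ₂ / 2) ^ 2) ^ 2 ≤
      (m + fh h ξ₁ ξ₂) ^ 2 := by
    rw [fh]; nlinarith [mul_nonneg hm hf₁, mul_nonneg hm hf₂, mul_nonneg hf₁ hf₂]
  nlinarith [sq_nonneg π]

section

open Complex

lemma CStarRing.norm_eq_sqrt_of_star_mul_self_eq_smul_one {E : Type*} [NormedRing E] [StarRing E]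
    [CStarRing E] [Nontrivial E] [NormedAlgebra ℂ E] {b : E} {c : ℝ} (hc : 0 ≤ c)
    (hb : star b * b = (c : ℂ) • 1) : ‖b‖ = √c := by
  rw [eq_comm, Real.sqrt_eq_iff_mul_self_eq hc (norm_nonneg b), ← CStarRing.norm_star_mul_self, hb,
    norm_smul, norm_one, mul_one, norm_real, Real.norm_of_nonneg hc]

lemma matOpNorm_inv_sub_I_smul_one {n : Type*} [Fintype n] [DecidableEq n] [Nonempty n]
    {A : Matrix n n ℂ} (hA : A.IsHermitian) {c : ℝ} (hc : 0 ≤ c)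
    (hsq : A * A = (c : ℂ) • 1) :
    matOpNorm (A - I • 1)⁻¹ = 1 / √(c + 1) := by
  have hc1 : 0 < c + 1 := by linarith
  have hprod : (A - I • 1) * (A + I • 1) = ((c + 1 : ℝ) : ℂ) • 1 := by
    simp only [sub_mul, mul_add, hsq, Matrix.mul_smul, Matrix.smul_mul, mul_one, one_mul, smul_smul,
      I_mul_I]
    push_cast
    module
  have hstar : star (A + I • 1) = A - I • 1 := by
    rw [star_add, star_smul, star_one, hA.star_eq, star_def, conj_I, neg_smul, sub_eq_add_neg]
  have hinv : (A - I • 1)⁻¹ = ((c + 1 : ℝ) : ℂ)⁻¹ • (A + I • 1) := by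
    apply Matrix.inv_eq_right_inv
    rw [Matrix.mul_smul, hprod, smul_smul, inv_mul_cancel₀ (by exact_mod_cast hc1.ne'), one_smul]
  have hnorm : ‖Matrix.toEuclideanCLM (n := n) (𝕜 := ℂ) (A + I • 1)‖ = √(c + 1) := by
    apply CStarRing.norm_eq_sqrt_of_star_mul_self_eq_smul_one hc1.le
    rw [← map_star, ← map_mul, hstar, hprod, map_smul, map_one]
  rw [matOpNorm, hinv, map_smul, norm_smul, hnorm, norm_inv, norm_real,
    Real.norm_of_nonneg hc1.le, inv_mul_eq_div, Real.sqrt_div_self']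

/-- `a σ₃ + s₁ σ₁ + s₂ σ₂`, with `σᵢ` the Pauli matrices. -/
noncomputable def pauliMatrix (a s₁ s₂ : ℝ) : Matrix (Fin 2) (Fin 2) ℂ :=
  !![(a : ℂ), s₁ - I * s₂; s₁ + I * s₂, -a]

lemma pauliMatrix_isHermitian (a s₁ s₂ : ℝ) : (pauliMatrix a s₁ s₂).IsHermitian := by
  ext i j
  fin_cases i <;> fin_cases j <;> simp [pauliMatrix, Matrix.conjTranspose_apply, sub_eq_add_neg]

lemma pauliMatrix_mul_self (a s₁ s₂ : ℝ) :
    pauliMatrix a s₁ s₂ * pauliMatrix a s₁ s₂ = ((a ^ 2 + s₁ ^ 2 + s₂ ^ 2 : ℝ) : ℂ) • 1 := by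
  ext i j
  fin_cases i <;> fin_cases j <;> simp [pauliMatrix, Matrix.mul_apply, Fin.sum_univ_two] <;>
    ring_nf <;> simp [I_sq]

lemma G0s2mod_eq_pauliMatrix (h m ξ₁ ξ₂ : ℝ) :
    G0s2mod h m ξ₁ ξ₂ =
      pauliMatrix (m + fh h ξ₁ ξ₂) (Real.sin (h * ξ₁) / h) (Real.sin (h * ξ₂) / h) := by
  ext i j
  fin_cases i <;> fin_cases j <;> simp [G0s2mod, G0s2, pauliMatrix]
  ring

end

theorem G0s2mod_resolvent_bound (m : ℝ) (hm : 0 ≤ m) :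
    ∃ C > 0, ∀ h : ℝ, 0 < h → ∀ ξ₁ ξ₂ : ℝ,
      h * ξ₁ ∈ Set.Icc (-(3 * Real.pi / 2)) (3 * Real.pi / 2) →
      h * ξ₂ ∈ Set.Icc (-(3 * Real.pi / 2)) (3 * Real.pi / 2) →
      (ξ₁, ξ₂) ≠ (0, 0) →
      matOpNorm ((G0s2mod h m ξ₁ ξ₂
          - Complex.I • (1 : Matrix (Fin 2) (Fin 2) ℂ))⁻¹)
        ≤ C / Real.sqrt (ξ₁ ^ 2 + ξ₂ ^ 2) := by
  refine ⟨3 * π / 4, by positivity, fun h hh ξ₁ ξ₂ hξ₁ hξ₂ hξ => ?_⟩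
  set g := (m + fh h ξ₁ ξ₂) ^ 2 + (sin (h * ξ₁) / h) ^ 2 + (sin (h * ξ₂) / h) ^ 2
  have hg : 0 ≤ g := by positivity
  have hbound : ξ₁ ^ 2 + ξ₂ ^ 2 ≤ (3 * π / 4) ^ 2 * (g + 1) := by
    have := sq_add_sq_le_G0s2mod_symbol hm hh (abs_le.mpr hξ₁) (abs_le.mpr hξ₂)
    nlinarith [sq_nonneg (3 * π / 4)]
  have hpos : 0 < ξ₁ ^ 2 + ξ₂ ^ 2 := by
    rcases ne_or_eq ξ₁ 0 with h₁ | rfl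
    · positivity
    · have h₂ : ξ₂ ≠ 0 := fun h₂ => hξ (by rw [h₂])
      positivity
  rw [G0s2mod_eq_pauliMatrix, matOpNorm_inv_sub_I_smul_one (pauliMatrix_isHermitian _ _ _) hg
    (pauliMatrix_mul_self _ _ _), div_le_div_iff₀ (Real.sqrt_pos.mpr (by linarith))
    (Real.sqrt_pos.mpr hpos), one_mul, Real.sqrt_le_iff, mul_pow, Real.sq_sqrt (by linarith)]
  exact ⟨by positivity, hbound⟩
end

section
/- For each fixed m ≥ 0 there exists c > 0 (one may take c = 8[(1+m²)(1+(8+m)²)]^{-1/2}) such that for all h ∈ (0,1], the maximum over ξ ∈ [-π/h, π/h]² of ‖(G₀ₕˢ(ξ) - iI)⁻¹ - (G̃₀ₕˢ(ξ) - iI)⁻¹‖ is at least c. -/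
/-!
At `h ξ₁ = h ξ₂ = π` the sines vanish and `fₕ = 8 / h`, so both symbols are diagonal:
`G₀ₕˢ = diag(m, -m)` and `G̃₀ₕˢ = diag(m + t, -(m + t))` with `t = 8 / h ≥ 8`. The first diagonal
entry of the resolvent difference is `(m - i)⁻¹ - (m + t - i)⁻¹`, of modulus
`t / (√(1 + m²) √(1 + (m + t)²))`; for `m ≥ 0` this is nondecreasing in `t`, hence at least its
value at `t = 8`.
-/

open Matrix Real
open Complex (I)

lemma matOpNorm_diagonal {n : Type*} [Fintype n] [DecidableEq n] (v : n → ℂ) :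
    matOpNorm (diagonal v) = ‖v‖ := by
  open scoped Matrix.Norms.L2Operator in exact l2_opNorm_diagonal v

lemma inv_diagonal_of_ne_zero {n K : Type*} [Fintype n] [DecidableEq n] [Field K] {v : n → K}
    (hv : ∀ i, v i ≠ 0) : (diagonal v)⁻¹ = diagonal fun i => (v i)⁻¹ :=
  inv_eq_left_inv <| by simp [diagonal_mul_diagonal, inv_mul_cancel₀ (hv _)]

lemma ofReal_sub_I_ne_zero (a : ℝ) : (a : ℂ) - I ≠ 0 := by
  intro h; simpa using congrArg Complex.im h

lemma inv_diagonal_ofReal_sub_I_smul_one {n : Type*} [Fintype n] [DecidableEq n] (v : n → ℝ) :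
    (diagonal (fun i => (v i : ℂ)) - I • 1)⁻¹ = diagonal fun i => ((v i : ℂ) - I)⁻¹ := by
  rw [smul_one_eq_diagonal, diagonal_sub]
  exact inv_diagonal_of_ne_zero fun i => ofReal_sub_I_ne_zero (v i)

lemma norm_ofReal_sub_I (a : ℝ) : ‖(a : ℂ) - I‖ = √(1 + a ^ 2) := by
  rw [Complex.norm_def, Complex.normSq_apply]
  simp only [Complex.sub_re, Complex.ofReal_re, Complex.I_re, sub_zero, Complex.sub_im,
    Complex.ofReal_im, Complex.I_im, zero_sub]
  ring_nf

lemma norm_inv_ofReal_sub_I_sub_inv (a b : ℝ) :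
    ‖((a : ℂ) - I)⁻¹ - ((b : ℂ) - I)⁻¹‖ = |b - a| / (√(1 + a ^ 2) * √(1 + b ^ 2)) := by
  have hab : ((a : ℂ) - I)⁻¹ - ((b : ℂ) - I)⁻¹
      = ((b - a : ℝ) : ℂ) / (((a : ℂ) - I) * ((b : ℂ) - I)) := by
    field_simp [ofReal_sub_I_ne_zero]; push_cast; ring
  rw [hab, norm_div, norm_mul, norm_ofReal_sub_I, norm_ofReal_sub_I, Complex.norm_real,
    Real.norm_eq_abs]

lemma div_sqrt_one_add_sq_add_le {m s t : ℝ} (hm : 0 ≤ m) (hs : 0 ≤ s) (hst : s ≤ t) :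
    s / √(1 + (m + s) ^ 2) ≤ t / √(1 + (m + t) ^ 2) := by
  have ht : 0 ≤ t := hs.trans hst
  rw [div_le_div_iff₀ (by positivity) (by positivity),
    ← pow_le_pow_iff_left₀ (by positivity) (by positivity) two_ne_zero, mul_pow, mul_pow,
    Real.sq_sqrt (by positivity), Real.sq_sqrt (by positivity)]
  have hts : 0 ≤ t - s := sub_nonneg.2 hst
  have key : t ^ 2 * (1 + (m + s) ^ 2) - s ^ 2 * (1 + (m + t) ^ 2)
      = (t - s) * (t + s) + m * (t - s) * (m * (t + s) + 2 * s * t) := by ring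
  have : 0 ≤ (t - s) * (t + s) + m * (t - s) * (m * (t + s) + 2 * s * t) := by positivity
  linarith

lemma fh_pi_div (h : ℝ) (hh : h ≠ 0) : fh h (π / h) (π / h) = 8 / h := by
  rw [fh, mul_div_cancel₀ _ hh, Real.sin_pi_div_two]; ring

lemma G0s2_pi_div (h m : ℝ) (hh : h ≠ 0) :
    G0s2 h m (π / h) (π / h) = diagonal fun i => ((![m, -m] i : ℝ) : ℂ) := by
  ext i j; fin_cases i <;> fin_cases j <;> simp [G0s2, mul_div_cancel₀ _ hh]

lemma G0s2mod_pi_div (h m : ℝ) (hh : h ≠ 0) :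
    G0s2mod h m (π / h) (π / h) = diagonal fun i => ((![m + 8 / h, -(m + 8 / h)] i : ℝ) : ℂ) := by
  rw [G0s2mod, G0s2_pi_div h m hh, fh_pi_div h hh]
  ext i j; fin_cases i <;> fin_cases j <;> simp; ring

lemma norm_inv_ofReal_sub_I_sub_inv_le_matOpNorm {n : Type*} [Fintype n] [DecidableEq n]
    (v w : n → ℝ) (i : n) :
    ‖((v i : ℂ) - I)⁻¹ - ((w i : ℂ) - I)⁻¹‖ ≤
      matOpNorm ((diagonal (fun i => (v i : ℂ)) - I • 1)⁻¹ -
        (diagonal (fun i => (w i : ℂ)) - I • 1)⁻¹) := by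
  rw [inv_diagonal_ofReal_sub_I_smul_one, inv_diagonal_ofReal_sub_I_smul_one, diagonal_sub,
    matOpNorm_diagonal]
  exact norm_le_pi_norm (fun i => ((v i : ℂ) - I)⁻¹ - ((w i : ℂ) - I)⁻¹) i

theorem symmetric_mod_nonconvergence_2D (m : ℝ) (hm : 0 ≤ m) :
    ∃ c : ℝ, c = 8 / Real.sqrt ((1 + m ^ 2) * (1 + (8 + m) ^ 2)) ∧ 0 < c ∧
      ∀ h : ℝ, 0 < h → h ≤ 1 →
        ∃ ξ₁ ∈ Set.Icc (-(Real.pi / h)) (Real.pi / h),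
        ∃ ξ₂ ∈ Set.Icc (-(Real.pi / h)) (Real.pi / h),
          c ≤ matOpNorm ((G0s2 h m ξ₁ ξ₂
                - Complex.I • (1 : Matrix (Fin 2) (Fin 2) ℂ))⁻¹
              - (G0s2mod h m ξ₁ ξ₂
                - Complex.I • (1 : Matrix (Fin 2) (Fin 2) ℂ))⁻¹) := by
  refine ⟨_, rfl, by positivity, fun h hh hh1 => ?_⟩
  have hmem : π / h ∈ Set.Icc (-(π / h)) (π / h) :=
    ⟨neg_le_self (by positivity), le_rfl⟩
  refine ⟨π / h, hmem, π / h, hmem, ?_⟩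
  have ht : 8 ≤ 8 / h := by rw [le_div_iff₀ hh]; linarith
  rw [G0s2_pi_div h m hh.ne', G0s2mod_pi_div h m hh.ne']
  refine le_trans ?_ (norm_inv_ofReal_sub_I_sub_inv_le_matOpNorm _ _ 0)
  rw [cons_val_zero, cons_val_zero, norm_inv_ofReal_sub_I_sub_inv, add_sub_cancel_left,
    abs_of_pos (by positivity), Real.sqrt_mul (by positivity), add_comm 8 m]
  calc 8 / (√(1 + m ^ 2) * √(1 + (m + 8) ^ 2)) = 8 / √(1 + (m + 8) ^ 2) / √(1 + m ^ 2) := by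
        rw [div_div, mul_comm]
    _ ≤ 8 / h / √(1 + (m + 8 / h) ^ 2) / √(1 + m ^ 2) :=
        div_le_div_of_nonneg_right (div_sqrt_one_add_sq_add_le hm (by norm_num) ht) (by positivity)
    _ = _ := by rw [div_div, mul_comm]
end

section
/- There exists c > 0 such that for all h > 0 and ξ ∈ ℝ² with hξ ∈ [-3π/2, 3π/2]², the quantity g̃₀ₕᶠᵇ(ξ) = (m + fₕ(ξ))² + (4/h²)sin²(hξ₁/2) + (4/h²)sin²(hξ₂/2) + (2/h²)[sin(h(ξ₁-ξ₂)) - sin(hξ₁) + sin(hξ₂)] satisfies g̃₀ₕᶠᵇ(ξ) ≥ c|ξ|². -/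
noncomputable def g0fb2mod (h m ξ₁ ξ₂ : ℝ) : ℝ :=
  (m + fh h ξ₁ ξ₂) ^ 2 + 4 / h ^ 2 * Real.sin (h * ξ₁ / 2) ^ 2
    + 4 / h ^ 2 * Real.sin (h * ξ₂ / 2) ^ 2
    + 2 / h ^ 2 * (Real.sin (h * (ξ₁ - ξ₂)) - Real.sin (h * ξ₁) + Real.sin (h * ξ₂))

open Real

namespace Real

theorem div_five_le_sin {x : ℝ} (hx₀ : 0 ≤ x) (hx : x ≤ 3 * π / 4) : x / 5 ≤ sin x := by
  have hπ : π < 3.15 := pi_lt_d2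
  rcases le_or_gt x (π / 2) with hx' | hx'
  · have := mul_le_sin hx₀ hx'
    have : x / 5 ≤ 2 / π * x := by
      rw [div_mul_eq_mul_div, div_le_div_iff₀ (by norm_num) pi_pos]
      nlinarith
    linarith
  · -- Jordan's inequality at `π - x ≥ x / 3`
    have hJ := mul_le_sin (x := π - x) (by linarith) (by linarith)
    rw [sin_pi_sub] at hJ
    have : x / 5 ≤ 2 / π * (π - x) := by
      rw [div_mul_eq_mul_div, div_le_div_iff₀ (by norm_num) pi_pos]
      nlinarith
    linarith

theorem sq_div_hundred_le_sin_half_sq {a : ℝ} (ha : |a| ≤ 3 * π / 2) :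
    a ^ 2 / 100 ≤ sin (a / 2) ^ 2 := by
  have h_abs : sin (|a| / 2) ^ 2 = sin (a / 2) ^ 2 := by
    rcases abs_cases a with ⟨hab, _⟩ | ⟨hab, _⟩ <;> simp [hab, neg_div]
  calc a ^ 2 / 100 = (|a| / 2 / 5) ^ 2 := by rw [div_pow, div_pow, sq_abs]; ring
    _ ≤ sin (|a| / 2) ^ 2 :=
      pow_le_pow_left₀ (by positivity) (div_five_le_sin (by positivity) (by linarith)) 2
    _ = sin (a / 2) ^ 2 := h_abs

theorem sin_sub_sub_sin_add_sin (a b : ℝ) :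
    sin (a - b) - sin a + sin b = 4 * sin (a / 2) * sin (b / 2) * sin ((a - b) / 2) := by
  have double (x : ℝ) : sin x = 2 * sin (x / 2) * cos (x / 2) := by
    rw [← sin_two_mul]; ring_nf
  have hsub : (a - b) / 2 = a / 2 - b / 2 := by ring
  rw [double (a - b), double a, double b, hsub, sin_sub, cos_sub]
  linear_combination (2 * sin (a / 2) * cos (a / 2)) * sin_sq_add_cos_sq (b / 2)
    - (2 * sin (b / 2) * cos (b / 2)) * sin_sq_add_cos_sq (a / 2)

theorem abs_sin_sub_sub_sin_add_sin_le (a b : ℝ) :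
    |sin (a - b) - sin a + sin b|
      ≤ (2 * sin (a / 2) ^ 2 + 2 * sin (b / 2) ^ 2) * |sin ((a - b) / 2)| := by
  rw [sin_sub_sub_sin_add_sin, abs_mul, abs_mul, abs_mul]
  gcongr
  nlinarith [sq_nonneg (|sin (a / 2)| - |sin (b / 2)|), sq_abs (sin (a / 2)), sq_abs (sin (b / 2))]

end Real

theorem scaled_symbol_lower_bound {μ a b : ℝ} (hμ : 0 ≤ μ)
    (ha : |a| ≤ 3 * π / 2) (hb : |b| ≤ 3 * π / 2) :
    (a ^ 2 + b ^ 2) / 1250 ≤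
      (μ + (4 * sin (a / 2) ^ 2 + 4 * sin (b / 2) ^ 2)) ^ 2
        + 4 * sin (a / 2) ^ 2 + 4 * sin (b / 2) ^ 2
        + 2 * (sin (a - b) - sin a + sin b) := by
  set S := 4 * sin (a / 2) ^ 2 + 4 * sin (b / 2) ^ 2
  set w := sin ((a - b) / 2)
  have hS : (a ^ 2 + b ^ 2) / 25 ≤ S := by
    linarith [sq_div_hundred_le_sin_half_sq ha, sq_div_hundred_le_sin_half_sq hb]
  have hS₀ : 0 ≤ S := by positivity
  have hcross : -(S * |w|) ≤ 2 * (sin (a - b) - sin a + sin b) := by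
    have := abs_sin_sub_sub_sin_add_sin_le a b
    linarith [neg_abs_le (sin (a - b) - sin a + sin b)]
  have hsq : S ^ 2 ≤ (μ + S) ^ 2 := pow_le_pow_left₀ hS₀ (by linarith) 2
  rcases le_or_gt |w| (1 / 2) with hw | hw
  · nlinarith [sq_nonneg S]
  · have hab : 1 < |a - b| := by
      have := abs_sin_le_abs (x := (a - b) / 2)
      rw [abs_div, abs_two] at this
      linarith
    have hr : 1 / 2 < a ^ 2 + b ^ 2 := by
      nlinarith [sq_abs (a - b), sq_nonneg (a + b)]
    have hw₁ : |w| ≤ 1 := abs_sin_le_one _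
    nlinarith [mul_le_mul hS hS (by positivity) hS₀]

theorem sq_mul_g0fb2mod {h : ℝ} (hh : h ≠ 0) (m ξ₁ ξ₂ : ℝ) :
    h ^ 2 * g0fb2mod h m ξ₁ ξ₂ =
      (h * m + (4 * sin (h * ξ₁ / 2) ^ 2 + 4 * sin (h * ξ₂ / 2) ^ 2)) ^ 2
        + 4 * sin (h * ξ₁ / 2) ^ 2 + 4 * sin (h * ξ₂ / 2) ^ 2
        + 2 * (sin (h * ξ₁ - h * ξ₂) - sin (h * ξ₁) + sin (h * ξ₂)) := by
  rw [g0fb2mod, fh, mul_sub]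
  field_simp

theorem g0fb2mod_lower_bound (m : ℝ) (hm : 0 ≤ m) :
    ∃ c > 0, ∀ h : ℝ, 0 < h → ∀ ξ₁ ξ₂ : ℝ,
      h * ξ₁ ∈ Set.Icc (-(3 * Real.pi / 2)) (3 * Real.pi / 2) →
      h * ξ₂ ∈ Set.Icc (-(3 * Real.pi / 2)) (3 * Real.pi / 2) →
      c * (ξ₁ ^ 2 + ξ₂ ^ 2) ≤ g0fb2mod h m ξ₁ ξ₂ := by
  refine ⟨1 / 1250, by norm_num, fun h hh ξ₁ ξ₂ hξ₁ hξ₂ => ?_⟩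
  have key := scaled_symbol_lower_bound (mul_nonneg hh.le hm)
    (abs_le.mpr hξ₁) (abs_le.mpr hξ₂)
  rw [← mul_le_mul_iff_right₀ (pow_pos hh 2), sq_mul_g0fb2mod hh.ne']
  linarith
end
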